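/- For every c with 0 < c ≤ 1, the inequality 1 − (1 + √c)² + 2 log(1 + √c) + 2c > 0 holds; equivalently, 2c > F_c(1 + √c), where F_c(1 + √c) = (1 + √c)² − 1 − log((1 + √c)²). -/

import Mathlib

noncomputable section

namespace Spiked

/-- `h(x) = x - 1 - log x`. -/
def hFun (x : ℝ) : ℝ := x - 1 - Real.log x

/-- `ψ_c(x) = x + c x/(x-1)`. -/
def psiFun (c x : ℝ) : ℝ := x + c * x / (x - 1)

/-- `F_c(x) = h(ψ_c(x))`. -/
def Ffun (c x : ℝ) : ℝ := hFun (psiFun c x)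

/-- `Q_c(x) = c · h(ψ_c(x)/c)`. -/
def Qfun (c x : ℝ) : ℝ := c * hFun (psiFun c x / c)

end Spiked

open Spiked

/-! With `s = √c` we have `ψ_c(1 + s) = (1 + s)²` and `h((1 + s)²) = 2s + s² - 2 log (1 + s)`.
The bound `log (1 + s) ≥ 2s/(s + 2) > s - s²/2` then gives `h((1 + s)²) < 2s² = 2c`. -/

namespace Spiked

open Real

theorem sub_sq_div_two_lt_log_one_add {s : ℝ} (hs : 0 < s) : s - s ^ 2 / 2 < log (1 + s) := by
  have hpade : s - s ^ 2 / 2 < 2 * s / (s + 2) := by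
    rw [lt_div_iff₀ (by positivity)]
    nlinarith [pow_pos hs 3]
  exact hpade.trans_le (le_log_one_add_of_nonneg hs.le)

theorem hFun_one_add_sq (s : ℝ) : hFun ((1 + s) ^ 2) = 2 * s + s ^ 2 - 2 * log (1 + s) := by
  rw [hFun, log_pow]
  push_cast
  ring

theorem hFun_one_add_sq_lt {s : ℝ} (hs : 0 < s) : hFun ((1 + s) ^ 2) < 2 * s ^ 2 := by
  rw [hFun_one_add_sq]
  linarith [sub_sq_div_two_lt_log_one_add hs]

theorem psiFun_one_add_sqrt (c : ℝ) : psiFun c (1 + √c) = (1 + √c) ^ 2 := by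
  rw [psiFun, add_sub_cancel_left, mul_div_right_comm, div_sqrt]
  ring

theorem Ffun_one_add_sqrt (c : ℝ) : Ffun c (1 + √c) = hFun ((1 + √c) ^ 2) := by
  rw [Ffun, psiFun_one_add_sqrt]

end Spiked

theorem two_c_gt_F_at_threshold_general (c : ℝ) (hc : 0 < c) :
    0 < 1 - (1 + Real.sqrt c) ^ 2 + 2 * Real.log (1 + Real.sqrt c) + 2 * c ∧
    Ffun c (1 + Real.sqrt c) < 2 * c ∧
    Ffun c (1 + Real.sqrt c)
      = (1 + Real.sqrt c) ^ 2 - 1 - Real.log ((1 + Real.sqrt c) ^ 2) := by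
  have hF_lt : Ffun c (1 + √c) < 2 * c :=
    calc Ffun c (1 + √c) = hFun ((1 + √c) ^ 2) := Ffun_one_add_sqrt c
      _ < 2 * √c ^ 2 := hFun_one_add_sq_lt (Real.sqrt_pos.mpr hc)
      _ = 2 * c := by rw [Real.sq_sqrt hc.le]
  have hF_eq : Ffun c (1 + √c) = (1 + √c) ^ 2 - 1 - Real.log ((1 + √c) ^ 2) := by
    rw [Ffun_one_add_sqrt, hFun]
  refine ⟨?_, hF_lt, hF_eq⟩
  linarith [Ffun_one_add_sqrt c, hFun_one_add_sq √c]

/-- For `0 < c ≤ 1`, `1 − (1+√c)² + 2 log(1+√c) + 2c > 0`; equivalently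
`2c > F_c(1+√c) = (1+√c)² − 1 − log((1+√c)²)`. -/
theorem two_c_gt_F_at_threshold (c : ℝ) (hc : 0 < c) (hc1 : c ≤ 1) :
    0 < 1 - (1 + Real.sqrt c) ^ 2 + 2 * Real.log (1 + Real.sqrt c) + 2 * c ∧
    Ffun c (1 + Real.sqrt c) < 2 * c ∧
    Ffun c (1 + Real.sqrt c)
      = (1 + Real.sqrt c) ^ 2 - 1 - Real.log ((1 + Real.sqrt c) ^ 2) :=
  two_c_gt_F_at_threshold_general c hc
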